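/- arXiv:2310.10242 — 2 statements merged into one kernel-verified Lean document; each statement's English description precedes it below -/
import Mathlib

section
/- For every integer d ≥ 2, every positive weight vector w, and all integers i ≥ 0 and k ≥ 0: max_{(v,M)∈Γ*_i^{i+k}} ‖B_i^{i+k}(v,M)‖_w ≥ ( max_{(v,M)∈Γ*_0^k} ‖B_0^k(v,M)‖_w )^{d^i}. -/
open Filter Topology

/-- Assumption (A): `E` has nonnegative entries with all column sums and row sums positive. -/
def AssumptionA {A : Type*} [Fintype A] (E : Matrix A A ℝ) : Prop :=
  (∀ a b, 0 ≤ E a b) ∧ (∀ b, 0 < ∑ a, E a b) ∧ (∀ a, 0 < ∑ b, E a b)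

/-- The hom tree-shift `X_E^{×d}` on the rooted `d`-tree, whose vertices are the finite
words over `Fin d` (the empty word is the root, and the children of `g` are `g ++ [i]`). -/
def treeX {A : Type*} (d : ℕ) (E : Matrix A A ℝ) : Set (List (Fin d) → A) :=
  {t | ∀ g : List (Fin d), ∀ i : Fin d, 0 < E (t (g ++ [i])) (t g)}

/-- `|Λ_n^m| = Σ_{i=n}^m d^i`, the number of vertices of the `d`-tree with depth
between `n` and `m`. -/
def latCard (d n m : ℕ) : ℕ := ∑ i ∈ Finset.Icc n m, d ^ i

/-- The blocks `B_n^m`: restrictions of configurations of `X_E^{×d}` to `Λ_n^m`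
(realized as total functions pinned to `default` outside `Λ_n^m`). -/
def blockSet {A : Type*} [Inhabited A] (d : ℕ) (E : Matrix A A ℝ) (n m : ℕ) :
    Set (List (Fin d) → A) :=
  {u | ∃ t ∈ treeX d E,
        (∀ g : List (Fin d), n ≤ g.length → g.length ≤ m → u g = t g) ∧
        (∀ g : List (Fin d), g.length < n ∨ m < g.length → u g = default)}

/-- The weight of a block on `Λ_n^m`:
`∏_{g∈Δ_n} w_{u_g} · ∏_{g∈Λ_n^{m−1}} ∏_{i=1}^d E_{u_{gi}, u_g}`. -/
noncomputable def blockWeight {A : Type*} (d : ℕ) (E : Matrix A A ℝ) (w : A → ℝ)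
    (n m : ℕ) (u : List (Fin d) → A) : ℝ :=
  (∏ᶠ (g : List (Fin d)) (_ : g.length = n), w (u g)) *
    ∏ᶠ (g : List (Fin d)) (_ : n ≤ g.length ∧ g.length < m),
      ∏ i : Fin d, E (u (g ++ [i])) (u g)

/-- The partition function `‖B_n^m‖_w`. -/
noncomputable def partFn {A : Type*} [Inhabited A] (d : ℕ) (E : Matrix A A ℝ)
    (w : A → ℝ) (n m : ℕ) : ℝ :=
  ∑ᶠ u ∈ blockSet d E n m, blockWeight d E w n m u

/-- The level-`n` distribution vector `π_n(t)`: frequencies of each symbol on level `n`. -/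
noncomputable def pivec {A : Type*} (d n : ℕ) (t : List (Fin d) → A) : A → ℝ :=
  fun a => (Nat.card {g : List (Fin d) // g.length = n ∧ t g = a} : ℝ) / (d : ℝ) ^ n

/-- The transition matrix `Q_n(t)` from level `n` to level `n+1`: `Q_n(t)_{a,b}` is the
proportion of vertices labeled `a` among all children of level-`n` vertices labeled `b`,
and `E_{a,b}/Σ_c E_{c,b}` if no level-`n` vertex is labeled `b`. -/
noncomputable def Qmat {A : Type*} [Fintype A] (d : ℕ) (E : Matrix A A ℝ) (n : ℕ)
    (t : List (Fin d) → A) : Matrix A A ℝ :=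
  fun a b =>
    if Nat.card {g : List (Fin d) // g.length = n ∧ t g = b} = 0 then
      E a b / ∑ c, E c b
    else
      (Nat.card {p : List (Fin d) × Fin d //
          p.1.length = n ∧ t p.1 = b ∧ t (p.1 ++ [p.2]) = a} : ℝ) /
        ((d : ℝ) * (Nat.card {g : List (Fin d) // g.length = n ∧ t g = b} : ℝ))

/-- `(v,M) ∈ Γ*_n^{n+k}`: the tuples of distribution vectors and transition matrices of
levels `n,…,n+k` realized by some configuration of `X_E^{×d}`. -/
def GammaStar {A : Type*} [Fintype A] (d : ℕ) (E : Matrix A A ℝ) (n k : ℕ)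
    (v : Fin (k + 1) → A → ℝ) (M : Fin k → Matrix A A ℝ) : Prop :=
  ∃ t ∈ treeX d E, (∀ i : Fin (k + 1), v i = pivec d (n + i) t) ∧
    ∀ i : Fin k, M i = Qmat d E (n + i) t

/-- `B_n^{n+k}(v,M)`: the blocks on `Λ_n^{n+k}` coming from configurations realizing the
distribution vectors `v` and transition matrices `M`. -/
def blockSetVM {A : Type*} [Fintype A] [Inhabited A] (d : ℕ) (E : Matrix A A ℝ)
    (n k : ℕ) (v : Fin (k + 1) → A → ℝ) (M : Fin k → Matrix A A ℝ) :
    Set (List (Fin d) → A) :=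
  {u | ∃ t ∈ treeX d E,
        (∀ i : Fin (k + 1), v i = pivec d (n + i) t) ∧
        (∀ i : Fin k, M i = Qmat d E (n + i) t) ∧
        (∀ g : List (Fin d), n ≤ g.length → g.length ≤ n + k → u g = t g) ∧
        (∀ g : List (Fin d), g.length < n ∨ n + k < g.length → u g = default)}

/-- `‖B_n^{n+k}(v,M)‖_w`. -/
noncomputable def partFnVM {A : Type*} [Fintype A] [Inhabited A] (d : ℕ)
    (E : Matrix A A ℝ) (w : A → ℝ) (n k : ℕ) (v : Fin (k + 1) → A → ℝ)
    (M : Fin k → Matrix A A ℝ) : ℝ :=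
  ∑ᶠ u ∈ blockSetVM d E n k v M, blockWeight d E w n (n + k) u


section Infra
variable {d : ℕ}

/-- Words of length `n` over `Fin d`. -/
abbrev Word (d n : ℕ) := {g : List (Fin d) // g.length = n}

instance (n : ℕ) : Fintype (Word d n) := inferInstanceAs (Fintype (List.Vector (Fin d) n))

def wordEquiv (d n : ℕ) : Word d n ≃ (Fin n → Fin d) :=
  (Equiv.refl (List.Vector (Fin d) n)).trans (Equiv.vectorEquivFin _ _)

lemma card_word (d n : ℕ) : Fintype.card (Word d n) = d ^ n := by
  rw [Fintype.card_congr (wordEquiv d n)]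
  simp [Fintype.card_fun]

instance wordFinite (n : ℕ) (P : List (Fin d) → Prop) :
    Finite {g : List (Fin d) // g.length = n ∧ P g} :=
  Set.Finite.to_subtype ((List.finite_length_eq (Fin d) n).subset fun _ hg => hg.1)

instance pairFinite (n : ℕ) (P : List (Fin d) × Fin d → Prop) :
    Finite {p : List (Fin d) × Fin d // p.1.length = n ∧ P p} := by
  have h : {p : List (Fin d) × Fin d | p.1.length = n ∧ P p}.Finite :=
    (((List.finite_length_eq (Fin d) n)).prod Set.finite_univ).subset
      (fun p hp => ⟨hp.1, trivial⟩)
  exact h.to_subtype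

lemma natCard_sigma {ι : Type*} [Fintype ι] (α : ι → Type*) [∀ i, Finite (α i)] :
    Nat.card (Σ i, α i) = ∑ i, Nat.card (α i) := by
  letI := fun i => Fintype.ofFinite (α i)
  simp [Nat.card_eq_fintype_card, Fintype.card_sigma]

/-- Splitting a level `i+m` word into its level-`i` prefix and the rest. -/
noncomputable def splitEquiv (i m : ℕ) (P : List (Fin d) → Prop) :
    (Σ h : Word d i, {g' : List (Fin d) // g'.length = m ∧ P (h.1 ++ g')}) ≃
      {g : List (Fin d) // g.length = i + m ∧ P g} := by
  refine Equiv.ofBijective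
    (fun x => ⟨x.1.1 ++ x.2.1,
      by rw [List.length_append, x.1.2, x.2.2.1], x.2.2.2⟩) ⟨?_, ?_⟩
  · rintro ⟨⟨h1, hh1⟩, ⟨g1, hg1, hp1⟩⟩ ⟨⟨h2, hh2⟩, ⟨g2, hg2, hp2⟩⟩ hxy
    simp only [Subtype.mk.injEq] at hxy
    obtain ⟨rfl, rfl⟩ := List.append_inj hxy (hh1.trans hh2.symm)
    rfl
  · rintro ⟨g, hg, hp⟩
    exact ⟨⟨⟨g.take i, by rw [List.length_take, hg]; omega⟩,
      ⟨g.drop i, by rw [List.length_drop, hg]; omega,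
        by rw [List.take_append_drop]; exact hp⟩⟩,
      Subtype.ext (List.take_append_drop i g)⟩

lemma card_split (i m : ℕ) (P : List (Fin d) → Prop) :
    Nat.card {g : List (Fin d) // g.length = i + m ∧ P g} =
      ∑ h : Word d i, Nat.card {g' : List (Fin d) // g'.length = m ∧ P (h.1 ++ g')} := by
  rw [Nat.card_congr (splitEquiv i m P).symm, natCard_sigma]

def pairEquiv (n : ℕ) (P : List (Fin d) → Fin d → Prop) :
    {p : List (Fin d) × Fin d // p.1.length = n ∧ P p.1 p.2} ≃
      Σ j : Fin d, {g : List (Fin d) // g.length = n ∧ P g j} where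
  toFun p := ⟨p.1.2, ⟨p.1.1, p.2⟩⟩
  invFun x := ⟨(x.2.1, x.1), x.2.2⟩
  left_inv p := rfl
  right_inv x := rfl

lemma card_split_pair (i m : ℕ) (P : List (Fin d) → Fin d → Prop) :
    Nat.card {p : List (Fin d) × Fin d // p.1.length = i + m ∧ P p.1 p.2} =
      ∑ h : Word d i, Nat.card
        {p : List (Fin d) × Fin d // p.1.length = m ∧ P (h.1 ++ p.1) p.2} := by
  rw [Nat.card_congr (pairEquiv (i+m) P)]
  rw [natCard_sigma]
  have : ∀ j : Fin d, Nat.card {g : List (Fin d) // g.length = i + m ∧ P g j} =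
      ∑ h : Word d i, Nat.card {g' : List (Fin d) // g'.length = m ∧ P (h.1 ++ g') j} :=
    fun j => card_split i m (fun g => P g j)
  rw [Finset.sum_congr rfl (fun j _ => this j), Finset.sum_comm]
  refine Finset.sum_congr rfl fun h _ => ?_
  rw [Nat.card_congr (pairEquiv m (fun g j => P (h.1 ++ g) j)), natCard_sigma]

end Infra

section Glue
variable {A : Type*} {d : ℕ}

/-- Gluing: levels `< i` follow the chain `q` (read downwards), and the subtree rooted
at the level-`i` vertex `h` is `fam h`. -/
def glue (i : ℕ) (q : ℕ → A) (fam : List (Fin d) → List (Fin d) → A) :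
    List (Fin d) → A :=
  fun g => if g.length < i then q (i - g.length) else fam (g.take i) (g.drop i)

lemma glue_append {i : ℕ} {q : ℕ → A} {fam : List (Fin d) → List (Fin d) → A}
    {h : List (Fin d)} (hh : h.length = i) (g' : List (Fin d)) :
    glue i q fam (h ++ g') = fam h g' := by
  have hlen : (h ++ g').length = i + g'.length := by rw [List.length_append, hh]
  rw [glue]
  rw [if_neg (by omega), List.take_left' hh, List.drop_left' hh]

lemma glue_mem_treeX {E : Matrix A A ℝ} {i : ℕ} {q : ℕ → A}
    {fam : List (Fin d) → List (Fin d) → A}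
    (hq : ∀ n, n < i → 0 < E (q n) (q (n + 1)))
    (hfam : ∀ h : List (Fin d), h.length = i → fam h ∈ treeX d E)
    (hroot : ∀ h : List (Fin d), h.length = i → fam h [] = q 0) :
    glue i q fam ∈ treeX d E := by
  intro g j
  have hlen : (g ++ [j]).length = g.length + 1 := by simp
  rcases lt_trichotomy (g.length + 1) i with hlt | heq | hgt
  · rw [glue, glue, if_pos (by omega), if_pos (by omega), hlen]
    have h1 : i - g.length = (i - (g.length + 1)) + 1 := by omega
    rw [h1]
    exact hq _ (by omega)
  · have hgi : g.length < i := by omega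
    have e1 : glue i q fam g = q 1 := by
      rw [glue, if_pos hgi]
      congr 1; omega
    have e2 : glue i q fam (g ++ [j]) = q 0 := by
      rw [glue, if_neg (by omega)]
      rw [List.take_of_length_le (by omega), List.drop_of_length_le (by omega)]
      exact hroot _ (by omega)
    rw [e1, e2]
    exact hq 0 (by omega)
  · have hgi : i ≤ g.length := by omega
    have e0 : glue i q fam g = fam (g.take i) (g.drop i) := by
      rw [glue, if_neg (by omega)]
    have et : (g ++ [j]).take i = g.take i := by
      rw [List.take_append, Nat.sub_eq_zero_of_le hgi]
      simp
    have ed : (g ++ [j]).drop i = g.drop i ++ [j] := by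
      rw [List.drop_append, Nat.sub_eq_zero_of_le hgi]
      simp
    have e1 : glue i q fam (g ++ [j]) = fam (g.take i) (g.drop i ++ [j]) := by
      rw [glue, if_neg (by omega), et, ed]
    rw [e0, e1]
    exact hfam (g.take i) (by rw [List.length_take]; omega) (g.drop i) j

end Glue

section Counting
open scoped Classical
variable {A : Type*} [Fintype A] {d : ℕ}

lemma card_glue_level {i : ℕ} {q : ℕ → A} {fam : List (Fin d) → List (Fin d) → A}
    (m : ℕ) (a : A) :
    Nat.card {g : List (Fin d) // g.length = i + m ∧ glue i q fam g = a} =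
      ∑ h : Word d i, Nat.card {g' : List (Fin d) // g'.length = m ∧ fam h.1 g' = a} := by
  rw [card_split i m (fun g => glue i q fam g = a)]
  refine Finset.sum_congr rfl fun h _ => ?_
  exact Nat.card_congr (Equiv.subtypeEquivRight fun g' => by rw [glue_append h.2])

lemma card_glue_pair {i : ℕ} {q : ℕ → A} {fam : List (Fin d) → List (Fin d) → A}
    (m : ℕ) (a b : A) :
    Nat.card {p : List (Fin d) × Fin d // p.1.length = i + m ∧
        glue i q fam p.1 = b ∧ glue i q fam (p.1 ++ [p.2]) = a} =
      ∑ h : Word d i, Nat.card {p : List (Fin d) × Fin d // p.1.length = m ∧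
        fam h.1 p.1 = b ∧ fam h.1 (p.1 ++ [p.2]) = a} := by
  rw [card_split_pair i m (fun g j => glue i q fam g = b ∧ glue i q fam (g ++ [j]) = a)]
  refine Finset.sum_congr rfl fun h _ => ?_
  refine Nat.card_congr (Equiv.subtypeEquivRight fun p => ?_)
  rw [glue_append h.2, List.append_assoc, glue_append h.2]

lemma card_level_zero (t : List (Fin d) → A) (a : A) :
    Nat.card {g : List (Fin d) // g.length = 0 ∧ t g = a} =
      if t [] = a then 1 else 0 := by
  split_ifs with h
  · have : Unique {g : List (Fin d) // g.length = 0 ∧ t g = a} :=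
      { default := ⟨[], rfl, h⟩
        uniq := fun g => Subtype.ext (List.length_eq_zero_iff.mp g.2.1) }
    exact Nat.card_unique
  · have : IsEmpty {g : List (Fin d) // g.length = 0 ∧ t g = a} := by
      refine ⟨fun g => h ?_⟩
      have := List.length_eq_zero_iff.mp g.2.1
      rw [← this]; exact g.2.2
    exact Nat.card_of_isEmpty

lemma root_eq_of_pivec {t s : List (Fin d) → A} (h : pivec d 0 t = pivec d 0 s) :
    t [] = s [] := by
  have ha := congrFun h (s [])
  rw [pivec, pivec, pow_zero, div_one, div_one] at ha
  have : Nat.card {g : List (Fin d) // g.length = 0 ∧ t g = s []} =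
      Nat.card {g : List (Fin d) // g.length = 0 ∧ s g = s []} := Nat.cast_injective ha
  rw [card_level_zero, card_level_zero, if_pos rfl] at this
  by_contra hne
  rw [if_neg hne] at this
  exact one_ne_zero this.symm

lemma card_eq_of_pivec (hd0 : d ≠ 0) {m : ℕ} {t s : List (Fin d) → A}
    (h : pivec d m t = pivec d m s) (a : A) :
    Nat.card {g : List (Fin d) // g.length = m ∧ t g = a} =
      Nat.card {g : List (Fin d) // g.length = m ∧ s g = a} := by
  have ha := congrFun h a
  rw [pivec, pivec, div_eq_div_iff (by positivity) (by positivity)] at ha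
  exact Nat.cast_injective (mul_right_cancel₀ (by positivity) ha)

lemma card_pair_eq_of_Qmat {E : Matrix A A ℝ} (hd0 : d ≠ 0) {m : ℕ}
    {t s : List (Fin d) → A}
    (hp : pivec d m t = pivec d m s) (hQ : Qmat d E m t = Qmat d E m s) (a b : A)
    (hb : Nat.card {g : List (Fin d) // g.length = m ∧ t g = b} ≠ 0) :
    Nat.card {p : List (Fin d) × Fin d // p.1.length = m ∧ t p.1 = b ∧ t (p.1 ++ [p.2]) = a} =
      Nat.card {p : List (Fin d) × Fin d // p.1.length = m ∧ s p.1 = b ∧ s (p.1 ++ [p.2]) = a} := by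
  have hb' : Nat.card {g : List (Fin d) // g.length = m ∧ s g = b} ≠ 0 := by
    rw [← card_eq_of_pivec hd0 hp b]; exact hb
  have ha := congrFun (congrFun hQ a) b
  rw [Qmat, Qmat] at ha
  simp only [if_neg hb, if_neg hb'] at ha
  rw [card_eq_of_pivec hd0 hp b] at ha
  have hden : (0:ℝ) < (d : ℝ) * (Nat.card {g : List (Fin d) // g.length = m ∧ s g = b} : ℝ) := by
    have h1 : (0:ℝ) < (d : ℝ) := by positivity
    have h2 : (0:ℝ) < (Nat.card {g : List (Fin d) // g.length = m ∧ s g = b} : ℝ) := by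
      exact_mod_cast Nat.pos_of_ne_zero hb'
    positivity
  rw [div_eq_div_iff hden.ne' hden.ne'] at ha
  exact Nat.cast_injective (mul_right_cancel₀ hden.ne' ha)

end Counting

section GlueStats
variable {A : Type*} [Fintype A] {d : ℕ}

lemma pivec_glue (hd0 : d ≠ 0) {i m : ℕ} {q : ℕ → A}
    {fam : List (Fin d) → List (Fin d) → A} {t : List (Fin d) → A}
    (hp : ∀ h : Word d i, pivec d m (fam h.1) = pivec d m t) :
    pivec d (i + m) (glue i q fam) = pivec d m t := by
  funext a
  rw [pivec, pivec, card_glue_level m a,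
    Finset.sum_congr rfl (fun h _ => card_eq_of_pivec hd0 (hp h) a),
    Finset.sum_const, smul_eq_mul, Finset.card_univ, card_word]
  have hdr : (d : ℝ) ≠ 0 := Nat.cast_ne_zero.mpr hd0
  push_cast
  rw [pow_add]
  field_simp

lemma Qmat_glue {E : Matrix A A ℝ} (hd0 : d ≠ 0) {i m : ℕ} {q : ℕ → A}
    {fam : List (Fin d) → List (Fin d) → A} {t : List (Fin d) → A}
    (hp : ∀ h : Word d i, pivec d m (fam h.1) = pivec d m t)
    (hQ : ∀ h : Word d i, Qmat d E m (fam h.1) = Qmat d E m t) :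
    Qmat d E (i + m) (glue i q fam) = Qmat d E m t := by
  funext a b
  have hlev : Nat.card {g : List (Fin d) // g.length = i + m ∧ glue i q fam g = b} =
      d ^ i * Nat.card {g : List (Fin d) // g.length = m ∧ t g = b} := by
    rw [card_glue_level,
      Finset.sum_congr rfl (fun h _ => card_eq_of_pivec hd0 (hp h) b),
      Finset.sum_const, smul_eq_mul, Finset.card_univ, card_word]
  simp only [Qmat]
  by_cases hcb : Nat.card {g : List (Fin d) // g.length = m ∧ t g = b} = 0
  · rw [if_pos (by rw [hlev, hcb, mul_zero]), if_pos hcb]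
  · have hne : d ^ i * Nat.card {g : List (Fin d) // g.length = m ∧ t g = b} ≠ 0 :=
      Nat.mul_ne_zero (pow_ne_zero _ hd0) hcb
    rw [if_neg (by rw [hlev]; exact hne), if_neg hcb]
    have hpair : Nat.card {p : List (Fin d) × Fin d // p.1.length = i + m ∧
          glue i q fam p.1 = b ∧ glue i q fam (p.1 ++ [p.2]) = a} =
        d ^ i * Nat.card {p : List (Fin d) × Fin d // p.1.length = m ∧
          t p.1 = b ∧ t (p.1 ++ [p.2]) = a} := by
      rw [card_glue_pair,
        Finset.sum_congr rfl (fun h _ => card_pair_eq_of_Qmat hd0 (hp h) (hQ h) a b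
          (by rw [card_eq_of_pivec hd0 (hp h) b]; exact hcb)),
        Finset.sum_const, smul_eq_mul, Finset.card_univ, card_word]
    rw [hlev, hpair]
    have hdr : (d : ℝ) ≠ 0 := Nat.cast_ne_zero.mpr hd0
    have hcbr : (Nat.card {g : List (Fin d) // g.length = m ∧ t g = b} : ℝ) ≠ 0 :=
      Nat.cast_ne_zero.mpr hcb
    push_cast
    field_simp

lemma exists_pos_row {E : Matrix A A ℝ} (hE : AssumptionA E) (a : A) :
    ∃ b, 0 < E a b := by
  by_contra hc
  push_neg at hc
  exact absurd (Finset.sum_nonpos (fun b _ => hc b)) (not_le.mpr (hE.2.2 a))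

lemma exists_pos_col {E : Matrix A A ℝ} (hE : AssumptionA E) (b : A) :
    ∃ a, 0 < E a b := by
  by_contra hc
  push_neg at hc
  exact absurd (Finset.sum_nonpos (fun a _ => hc a)) (not_le.mpr (hE.2.1 b))

lemma treeX_nonempty [Inhabited A] {E : Matrix A A ℝ} (hE : AssumptionA E) :
    (treeX d E).Nonempty := by
  classical
  let c : ℕ → A := fun n => Nat.rec default (fun _ x => (exists_pos_col hE x).choose) n
  refine ⟨fun g => c g.length, fun g j => ?_⟩
  have hlen : (g ++ [j]).length = g.length + 1 := by simp
  simp only [hlen]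
  exact (exists_pos_col hE (c g.length)).choose_spec

end GlueStats

section Products
variable {A : Type*} [Fintype A] {d : ℕ} {M' : Type*} [CommMonoid M']

noncomputable instance rangeFintype (n m : ℕ) :
    Fintype {g : List (Fin d) // n ≤ g.length ∧ g.length < m} := by
  have : Finite {g : List (Fin d) // n ≤ g.length ∧ g.length < m} :=
    ((List.finite_length_lt (Fin d) m).subset fun _ hg => hg.2).to_subtype
  exact Fintype.ofFinite _

instance : Unique (Word d 0) :=
  ⟨⟨⟨[], rfl⟩⟩, fun g => Subtype.ext (List.length_eq_zero_iff.mp g.2)⟩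

noncomputable def splitEquivW (i m : ℕ) : Word d i × Word d m ≃ Word d (i + m) := by
  refine Equiv.ofBijective
    (fun x => ⟨x.1.1 ++ x.2.1, by rw [List.length_append, x.1.2, x.2.2]⟩) ⟨?_, ?_⟩
  · rintro ⟨⟨h1, hh1⟩, ⟨g1, hg1⟩⟩ ⟨⟨h2, hh2⟩, ⟨g2, hg2⟩⟩ hxy
    simp only [Subtype.mk.injEq] at hxy
    obtain ⟨rfl, rfl⟩ := List.append_inj hxy (hh1.trans hh2.symm)
    rfl
  · rintro ⟨g, hg⟩
    exact ⟨(⟨g.take i, by rw [List.length_take, hg]; omega⟩,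
      ⟨g.drop i, by rw [List.length_drop, hg]; omega⟩),
      Subtype.ext (List.take_append_drop i g)⟩

noncomputable def rangeEquiv (i k : ℕ) :
    Word d i × {g : List (Fin d) // 0 ≤ g.length ∧ g.length < k} ≃
      {g : List (Fin d) // i ≤ g.length ∧ g.length < i + k} := by
  refine Equiv.ofBijective
    (fun x => ⟨x.1.1 ++ x.2.1, by
      have := x.1.2; have := x.2.2.2
      constructor <;> (rw [List.length_append, x.1.2] <;> omega)⟩) ⟨?_, ?_⟩
  · rintro ⟨⟨h1, hh1⟩, ⟨g1, hg1⟩⟩ ⟨⟨h2, hh2⟩, ⟨g2, hg2⟩⟩ hxy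
    simp only [Subtype.mk.injEq] at hxy
    obtain ⟨rfl, rfl⟩ := List.append_inj hxy (hh1.trans hh2.symm)
    rfl
  · rintro ⟨g, hg1, hg2⟩
    exact ⟨(⟨g.take i, by rw [List.length_take]; omega⟩,
      ⟨g.drop i, by rw [List.length_drop] <;> omega⟩),
      Subtype.ext (List.take_append_drop i g)⟩

lemma prod_word_split (i m : ℕ) (f : List (Fin d) → M') :
    ∏ g : Word d (i + m), f g.1 = ∏ h : Word d i, ∏ g' : Word d m, f (h.1 ++ g'.1) := by
  rw [← Equiv.prod_comp (splitEquivW i m) (fun g : Word d (i+m) => f g.1),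
    Fintype.prod_prod_type]
  rfl

lemma prod_range_split (i k : ℕ) (f : List (Fin d) → M') :
    ∏ g : {g : List (Fin d) // i ≤ g.length ∧ g.length < i + k}, f g.1 =
      ∏ h : Word d i, ∏ g' : {g : List (Fin d) // 0 ≤ g.length ∧ g.length < k},
        f (h.1 ++ g'.1) := by
  rw [← Equiv.prod_comp (rangeEquiv i k)
    (fun g : {g : List (Fin d) // i ≤ g.length ∧ g.length < i + k} => f g.1),
    Fintype.prod_prod_type]
  rfl

lemma blockWeight_eq {E : Matrix A A ℝ} {w : A → ℝ} (n m : ℕ) (u : List (Fin d) → A) :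
    blockWeight d E w n m u =
      (∏ g : Word d n, w (u g.1)) *
        ∏ g : {g : List (Fin d) // n ≤ g.length ∧ g.length < m},
          ∏ j : Fin d, E (u (g.1 ++ [j])) (u g.1) := by
  rw [blockWeight]
  congr 1
  · rw [← finprod_subtype_eq_finprod_cond, finprod_eq_prod_of_fintype]
  · rw [← finprod_subtype_eq_finprod_cond, finprod_eq_prod_of_fintype]

lemma blockWeight_nonneg {E : Matrix A A ℝ} {w : A → ℝ}
    (hE : ∀ a b, 0 ≤ E a b) (hw : ∀ a, 0 < w a) (n m : ℕ) (u : List (Fin d) → A) :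
    0 ≤ blockWeight d E w n m u := by
  rw [blockWeight_eq]
  refine mul_nonneg (Finset.prod_nonneg fun g _ => (hw _).le) ?_
  exact Finset.prod_nonneg fun g _ => Finset.prod_nonneg fun j _ => hE _ _

end Products

section Phi
variable {A : Type*} [Fintype A] [Inhabited A] {d : ℕ}

/-- Gluing blocks: assemble a family of blocks on `Λ_0^k` into a block on `Λ_i^{i+k}`. -/
def Phi (i k : ℕ) (fam : Word d i → List (Fin d) → A) : List (Fin d) → A :=
  fun g => if hg : i ≤ g.length ∧ g.length ≤ i + k then
      fam ⟨g.take i, by rw [List.length_take]; omega⟩ (g.drop i) else default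

lemma Phi_append {i k : ℕ} {fam : Word d i → List (Fin d) → A} (h : Word d i)
    {g' : List (Fin d)} (hg' : g'.length ≤ k) :
    Phi i k fam (h.1 ++ g') = fam h g' := by
  have hlen : (h.1 ++ g').length = i + g'.length := by rw [List.length_append, h.2]
  rw [Phi, dif_pos (by constructor <;> omega)]
  congr 1
  · exact Subtype.ext (List.take_left' h.2)
  · exact List.drop_left' h.2

lemma Phi_default {i k : ℕ} {fam : Word d i → List (Fin d) → A} (g : List (Fin d))
    (hg : g.length < i ∨ i + k < g.length) : Phi i k fam g = default :=
  dif_neg (by omega)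

lemma blockWeight_Phi {E : Matrix A A ℝ} {w : A → ℝ} (i k : ℕ)
    (fam : Word d i → List (Fin d) → A) :
    blockWeight d E w i (i + k) (Phi i k fam) =
      ∏ h : Word d i, blockWeight d E w 0 k (fam h) := by
  have hbw : ∀ h : Word d i, blockWeight d E w 0 k (fam h) =
      w (fam h []) * ∏ g' : {g : List (Fin d) // 0 ≤ g.length ∧ g.length < k},
        ∏ j : Fin d, E (fam h (g'.1 ++ [j])) (fam h g'.1) := by
    intro h
    rw [blockWeight_eq]
    congr 1
    rw [Fintype.prod_unique]
    rfl
  rw [blockWeight_eq, Finset.prod_congr rfl (fun h _ => hbw h), Finset.prod_mul_distrib]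
  congr 1
  · refine Finset.prod_congr rfl fun h _ => ?_
    have : h.1 = h.1 ++ [] := (List.append_nil h.1).symm
    rw [this, Phi_append h (by simp)]
  · rw [prod_range_split i k (fun g => ∏ j : Fin d, E (Phi i k fam (g ++ [j])) (Phi i k fam g))]
    refine Finset.prod_congr rfl fun h _ => Finset.prod_congr rfl fun g' _ => ?_
    refine Finset.prod_congr rfl fun j _ => ?_
    rw [List.append_assoc, Phi_append h (by have := g'.2.2; simp; omega),
      Phi_append h (by have := g'.2.2; omega)]

lemma finite_trunc (N : ℕ) :
    {u : List (Fin d) → A | ∀ g : List (Fin d), N < g.length → u g = default}.Finite := by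
  classical
  have : Finite {g : List (Fin d) // g.length ≤ N} :=
    (List.finite_length_le (Fin d) N).to_subtype
  have hsub : {u : List (Fin d) → A | ∀ g : List (Fin d), N < g.length → u g = default} ⊆
      Set.range (fun f : ({g : List (Fin d) // g.length ≤ N} → A) =>
        fun g => if hg : g.length ≤ N then f ⟨g, hg⟩ else default) := by
    intro u hu
    refine ⟨fun g => u g.1, funext fun g => ?_⟩
    by_cases hg : g.length ≤ N
    · simp [hg]
    · simp only [dif_neg hg]
      exact (hu g (by omega)).symm
  exact (Set.finite_range _).subset hsub

end Phi

section PartHelpers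
variable {A : Type*} [Fintype A] [Inhabited A] {d : ℕ}

lemma blockSetVM_finite (E : Matrix A A ℝ) (n k : ℕ) (v : Fin (k+1) → A → ℝ)
    (M : Fin k → Matrix A A ℝ) : (blockSetVM d E n k v M).Finite := by
  refine (finite_trunc (n + k)).subset fun u hu g hg => ?_
  obtain ⟨t, _, _, _, _, hdef⟩ := hu
  exact hdef g (Or.inr hg)

lemma blockSet_finite (E : Matrix A A ℝ) (n m : ℕ) : (blockSet d E n m).Finite := by
  refine (finite_trunc m).subset fun u hu g hg => ?_
  obtain ⟨t, _, _, hdef⟩ := hu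
  exact hdef g (Or.inr hg)

lemma partFnVM_eq_sum (E : Matrix A A ℝ) (w : A → ℝ) (n k : ℕ)
    (v : Fin (k+1) → A → ℝ) (M : Fin k → Matrix A A ℝ) :
    partFnVM d E w n k v M =
      ∑ u ∈ (blockSetVM_finite E n k v M).toFinset, blockWeight d E w n (n + k) u := by
  rw [partFnVM, ← finsum_mem_coe_finset, Set.Finite.coe_toFinset]

lemma partFnVM_nonneg {E : Matrix A A ℝ} {w : A → ℝ} (hE : ∀ a b, 0 ≤ E a b)
    (hw : ∀ a, 0 < w a) (n k : ℕ) (v : Fin (k+1) → A → ℝ) (M : Fin k → Matrix A A ℝ) :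
    0 ≤ partFnVM d E w n k v M := by
  rw [partFnVM_eq_sum]
  exact Finset.sum_nonneg fun u _ => blockWeight_nonneg hE hw _ _ u

end PartHelpers

section Core
variable {A : Type*} [Fintype A] [Inhabited A] {d : ℕ}

noncomputable def chain (E : Matrix A A ℝ) (hE : AssumptionA E) (r : A) : ℕ → A :=
  fun n => (fun a => (exists_pos_row hE a).choose)^[n] r

lemma chain_zero (E : Matrix A A ℝ) (hE : AssumptionA E) (r : A) :
    chain E hE r 0 = r := rfl

lemma chain_pos (E : Matrix A A ℝ) (hE : AssumptionA E) (r : A) (n : ℕ) :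
    0 < E (chain E hE r n) (chain E hE r (n + 1)) := by
  have h1 : chain E hE r (n + 1) = (fun a => (exists_pos_row hE a).choose)
      (chain E hE r n) :=
    Function.iterate_succ_apply' _ n r
  rw [h1]
  exact (exists_pos_row hE (chain E hE r n)).choose_spec

/-- Extend a family of labelled trees indexed by `Word d i` to one indexed by all lists. -/
def famExt (i : ℕ) (th : Word d i → List (Fin d) → A) (t : List (Fin d) → A) :
    List (Fin d) → List (Fin d) → A :=
  fun l => if hl : l.length = i then th ⟨l, hl⟩ else t

lemma famExt_word {i : ℕ} {th : Word d i → List (Fin d) → A} {t : List (Fin d) → A}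
    (h : Word d i) : famExt i th t h.1 = th h := by
  rw [famExt, dif_pos h.2]

lemma core_ineq {E : Matrix A A ℝ} (hd0 : d ≠ 0) (hE : AssumptionA E) {w : A → ℝ}
    (hw : ∀ a, 0 < w a) (i k : ℕ) (v0 : Fin (k + 1) → A → ℝ)
    (M0 : Fin k → Matrix A A ℝ) (t : List (Fin d) → A) (ht : t ∈ treeX d E)
    (htv : ∀ j : Fin (k + 1), v0 j = pivec d (0 + j) t)
    (htM : ∀ j : Fin k, M0 j = Qmat d E (0 + j) t) :
    ∃ v M, GammaStar d E i k v M ∧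
      (partFnVM d E w 0 k v0 M0) ^ d ^ i ≤ partFnVM d E w i k v M := by
  classical
  set q : ℕ → A := chain E hE (t []) with hqdef
  have hq : ∀ n, 0 < E (q n) (q (n + 1)) := chain_pos E hE (t [])
  set T : List (Fin d) → A := glue i q (fun _ => t) with hTdef
  have hTmem : T ∈ treeX d E :=
    glue_mem_treeX (fun n _ => hq n) (fun _ _ => ht) (fun _ _ => rfl)
  refine ⟨fun j => pivec d (i + j) T, fun j => Qmat d E (i + j) T,
    ⟨T, hTmem, fun _ => rfl, fun _ => rfl⟩, ?_⟩
  set v : Fin (k + 1) → A → ℝ := fun j => pivec d (i + j) T with hvdef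
  set M : Fin k → Matrix A A ℝ := fun j => Qmat d E (i + j) T with hMdef
  set B0 : Finset (List (Fin d) → A) := (blockSetVM_finite E 0 k v0 M0).toFinset with hB0
  set B1 : Finset (List (Fin d) → A) := (blockSetVM_finite E i k v M).toFinset with hB1
  rw [partFnVM_eq_sum, partFnVM_eq_sum]
  -- membership of glued blocks
  have hmem : ∀ fam ∈ Fintype.piFinset (fun _ : Word d i => B0),
      Phi i k fam ∈ blockSetVM d E i k v M := by
    intro fam hfam
    have hfm : ∀ h : Word d i, fam h ∈ blockSetVM d E 0 k v0 M0 := by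
      intro h
      have := Fintype.mem_piFinset.mp hfam h
      rwa [hB0, Set.Finite.mem_toFinset] at this
    simp only [blockSetVM, Set.mem_setOf_eq] at hfm
    choose th h1 h2 h3 h4 h5 using hfm
    -- the subtree configurations realize the same statistics as t
    have hpv : ∀ m : ℕ, m ≤ k → ∀ h : Word d i,
        pivec d m (famExt i th t h.1) = pivec d m t := by
      intro m hm h
      rw [famExt_word]
      have e1 := h2 h ⟨m, by omega⟩
      have e2 := htv ⟨m, by omega⟩
      simp only [Fin.val_mk, Nat.zero_add] at e1 e2
      rw [← e1, ← e2]
    have hQv : ∀ m : ℕ, m < k → ∀ h : Word d i,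
        Qmat d E m (famExt i th t h.1) = Qmat d E m t := by
      intro m hm h
      rw [famExt_word]
      have e1 := h3 h ⟨m, hm⟩
      have e2 := htM ⟨m, hm⟩
      simp only [Fin.val_mk, Nat.zero_add] at e1 e2
      rw [← e1, ← e2]
    have hroot : ∀ h : Word d i, th h [] = t [] := by
      intro h
      have := hpv 0 (by omega) h
      rw [famExt_word] at this
      exact root_eq_of_pivec this
    set t' : List (Fin d) → A := glue i q (famExt i th t) with ht'def
    have ht' : t' ∈ treeX d E := by
      refine glue_mem_treeX (fun n _ => hq n) (fun l hl => ?_) (fun l hl => ?_)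
      · rw [famExt, dif_pos hl]; exact h1 _
      · rw [famExt, dif_pos hl]; exact hroot _
    refine ⟨t', ht', ?_, ?_, ?_, ?_⟩
    · intro j
      have e1 : pivec d (i + (j : ℕ)) T = pivec d (j : ℕ) t :=
        pivec_glue hd0 (fun _ => rfl)
      have e2 : pivec d (i + (j : ℕ)) t' = pivec d (j : ℕ) t :=
        pivec_glue hd0 (hpv (j : ℕ) (by omega))
      show pivec d (i + (j : ℕ)) T = pivec d (i + (j : ℕ)) t'
      rw [e1, e2]
    · intro j
      have e1 : Qmat d E (i + (j : ℕ)) T = Qmat d E (j : ℕ) t :=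
        Qmat_glue hd0 (fun _ => rfl) (fun _ => rfl)
      have e2 : Qmat d E (i + (j : ℕ)) t' = Qmat d E (j : ℕ) t :=
        Qmat_glue hd0 (hpv (j : ℕ) (by omega)) (hQv (j : ℕ) (by omega))
      show Qmat d E (i + (j : ℕ)) T = Qmat d E (i + (j : ℕ)) t'
      rw [e1, e2]
    · intro g hg1 hg2
      have hgt : (g.take i).length = i := by rw [List.length_take]; omega
      have e1 : Phi i k fam g = fam ⟨g.take i, hgt⟩ (g.drop i) := by
        rw [Phi, dif_pos ⟨hg1, hg2⟩]
      have e2 : t' g = th ⟨g.take i, hgt⟩ (g.drop i) := by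
        rw [ht'def, glue, if_neg (by omega), famExt, dif_pos hgt]
      have e3 : fam ⟨g.take i, hgt⟩ (g.drop i) = th ⟨g.take i, hgt⟩ (g.drop i) :=
        h4 _ _ (Nat.zero_le _) (by rw [List.length_drop]; omega)
      rw [e1, e3, e2]
    · intro g hg
      exact Phi_default g hg
  -- injectivity of gluing
  have hinj : ∀ f1 ∈ Fintype.piFinset (fun _ : Word d i => B0),
      ∀ f2 ∈ Fintype.piFinset (fun _ : Word d i => B0),
      Phi i k f1 = Phi i k f2 → f1 = f2 := by
    intro f1 hf1 f2 hf2 heq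
    have hm1 : ∀ h : Word d i, f1 h ∈ blockSetVM d E 0 k v0 M0 := fun h => by
      have := Fintype.mem_piFinset.mp hf1 h
      rwa [hB0, Set.Finite.mem_toFinset] at this
    have hm2 : ∀ h : Word d i, f2 h ∈ blockSetVM d E 0 k v0 M0 := fun h => by
      have := Fintype.mem_piFinset.mp hf2 h
      rwa [hB0, Set.Finite.mem_toFinset] at this
    funext h g'
    rcases le_or_gt g'.length k with hle | hlt
    · have := congrFun heq (h.1 ++ g')
      rwa [Phi_append h hle, Phi_append h hle] at this
    · obtain ⟨_, _, _, _, _, hd1⟩ := hm1 h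
      obtain ⟨_, _, _, _, _, hd2⟩ := hm2 h
      rw [hd1 g' (Or.inr (by omega)), hd2 g' (Or.inr (by omega))]
  -- the computation
  calc (∑ u ∈ B0, blockWeight d E w 0 (0 + k) u) ^ d ^ i
      = ∏ _h : Word d i, ∑ u ∈ B0, blockWeight d E w 0 (0 + k) u := by
        rw [Finset.prod_const, Finset.card_univ, card_word]
    _ = ∑ fam ∈ Fintype.piFinset (fun _ : Word d i => B0),
          ∏ h : Word d i, blockWeight d E w 0 (0 + k) (fam h) :=
        Finset.prod_univ_sum _ _
    _ = ∑ fam ∈ Fintype.piFinset (fun _ : Word d i => B0),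
          blockWeight d E w i (i + k) (Phi i k fam) := by
        refine Finset.sum_congr rfl fun fam _ => ?_
        rw [blockWeight_Phi]
        simp only [Nat.zero_add]
    _ = ∑ u ∈ (Fintype.piFinset (fun _ : Word d i => B0)).image (Phi i k),
          blockWeight d E w i (i + k) u := (Finset.sum_image hinj).symm
    _ ≤ ∑ u ∈ B1, blockWeight d E w i (i + k) u := by
        refine Finset.sum_le_sum_of_subset_of_nonneg ?_
          (fun u _ _ => blockWeight_nonneg hE.1 hw _ _ u)
        intro u hu
        obtain ⟨fam, hfam, rfl⟩ := Finset.mem_image.mp hu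
        rw [hB1, Set.Finite.mem_toFinset]
        exact hmem fam hfam

end Core
/-- `max_{(v,M)∈Γ*_i^{i+k}} ‖B_i^{i+k}(v,M)‖_w ≥
(max_{(v,M)∈Γ*_0^k} ‖B_0^k(v,M)‖_w)^{d^i}`. -/
theorem stmt9 {A : Type*} [Fintype A] [Inhabited A] (d : ℕ) (hd : 2 ≤ d)
    (E : Matrix A A ℝ) (hE : AssumptionA E) (w : A → ℝ) (hw : ∀ a, 0 < w a)
    (i k : ℕ) :
    (sSup {x : ℝ | ∃ v M, GammaStar d E 0 k v M ∧ x = partFnVM d E w 0 k v M}) ^ d ^ i ≤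
      sSup {x : ℝ | ∃ v M, GammaStar d E i k v M ∧ x = partFnVM d E w i k v M} := by
  classical
  have hd0 : d ≠ 0 := by omega
  have hN : d ^ i ≠ 0 := pow_ne_zero _ hd0
  have hBdd : BddAbove {x : ℝ | ∃ v M, GammaStar d E i k v M ∧ x = partFnVM d E w i k v M} := by
    refine ⟨∑ u ∈ (blockSet_finite E i (i + k)).toFinset, blockWeight d E w i (i + k) u, ?_⟩
    rintro x ⟨v, M, _, rfl⟩
    rw [partFnVM_eq_sum]
    refine Finset.sum_le_sum_of_subset_of_nonneg ?_
      (fun u _ _ => blockWeight_nonneg hE.1 hw _ _ u)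
    intro u hu
    rw [Set.Finite.mem_toFinset] at hu ⊢
    obtain ⟨t, ht, _, _, h4, h5⟩ := hu
    exact ⟨t, ht, h4, h5⟩
  have hS1nn : 0 ≤ sSup {x : ℝ | ∃ v M, GammaStar d E i k v M ∧ x = partFnVM d E w i k v M} := by
    refine Real.sSup_nonneg ?_
    rintro x ⟨v, M, _, rfl⟩
    exact partFnVM_nonneg hE.1 hw _ _ _ _
  have key : ∀ x ∈ {x : ℝ | ∃ v M, GammaStar d E 0 k v M ∧ x = partFnVM d E w 0 k v M},
      x ^ d ^ i ≤ sSup {x : ℝ | ∃ v M, GammaStar d E i k v M ∧ x = partFnVM d E w i k v M} := by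
    rintro x ⟨v0, M0, ⟨t, ht, htv, htM⟩, rfl⟩
    obtain ⟨v, M, hvm, hineq⟩ := core_ineq hd0 hE hw i k v0 M0 t ht htv htM
    exact hineq.trans (le_csSup hBdd ⟨v, M, hvm, rfl⟩)
  have h0nn : ∀ x ∈ {x : ℝ | ∃ v M, GammaStar d E 0 k v M ∧ x = partFnVM d E w 0 k v M},
      (0:ℝ) ≤ x := by
    rintro x ⟨v, M, _, rfl⟩
    exact partFnVM_nonneg hE.1 hw _ _ _ _
  have hle : sSup {x : ℝ | ∃ v M, GammaStar d E 0 k v M ∧ x = partFnVM d E w 0 k v M} ≤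
      (sSup {x : ℝ | ∃ v M, GammaStar d E i k v M ∧ x = partFnVM d E w i k v M}) ^
        (((d ^ i : ℕ) : ℝ))⁻¹ := by
    refine Real.sSup_le (fun x hx => ?_) (Real.rpow_nonneg hS1nn _)
    have hx0 : 0 ≤ x := h0nn x hx
    calc x = (x ^ d ^ i) ^ (((d ^ i : ℕ) : ℝ))⁻¹ :=
          (Real.pow_rpow_inv_natCast hx0 hN).symm
      _ ≤ _ := Real.rpow_le_rpow (by positivity) (key x hx) (by positivity)
  calc (sSup {x : ℝ | ∃ v M, GammaStar d E 0 k v M ∧ x = partFnVM d E w 0 k v M}) ^ d ^ i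
      ≤ ((sSup {x : ℝ | ∃ v M, GammaStar d E i k v M ∧ x = partFnVM d E w i k v M}) ^
          (((d ^ i : ℕ) : ℝ))⁻¹) ^ d ^ i :=
        pow_le_pow_left₀ (Real.sSup_nonneg h0nn) hle _
    _ = _ := Real.rpow_inv_natCast_pow hS1nn hN
end

section
/- Let d > 1 be real. For every integer k ≥ 1 and every a ∈ A: (1 − d^{−k})·α ≤ λ^{(k)}_a ≤ (1 − d^{−k})·β; equivalently, for every π ∈ Γ_A, F_k(π, (P*^{(0)},…,P*^{(k−1)}); 1/d, E) = (λ^{(k)})^T π lies in [(1 − d^{−k})α, (1 − d^{−k})β]. -/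
open Filter Topology

/-- A probability vector indexed by the alphabet `A`. -/
def IsProbVec {A : Type*} [Fintype A] (π : A → ℝ) : Prop :=
  (∀ a, 0 ≤ π a) ∧ ∑ a, π a = 1

/-- A column-stochastic matrix: nonnegative entries, each column sums to `1`. -/
def IsColStochastic {A : Type*} [Fintype A] (P : Matrix A A ℝ) : Prop :=
  (∀ a b, 0 ≤ P a b) ∧ ∀ b, ∑ a, P a b = 1

/-- The Kullback–Leibler divergence vector `D_KL(Q‖M)_b = Σ_a Q_{a,b} log(Q_{a,b}/M_{a,b})`
(the convention `0 · log(0/0) = 0` is automatic). -/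
noncomputable def DKL {A : Type*} [Fintype A] (Q M : Matrix A A ℝ) : A → ℝ :=
  fun b => ∑ a, Q a b * Real.log (Q a b / M a b)

/-- The vectors `λ^{(i)}`: `λ^{(0)} = 0` and
`λ^{(i)}_a = ((d−1)/d^i) log Σ_b e^{(d^i/(d−1)) λ^{(i−1)}_b} E_{b,a}` (the summands with
`E_{b,a} = 0` vanish, so the sum may be taken over all of `A`). -/
noncomputable def lam {A : Type*} [Fintype A] (E : Matrix A A ℝ) (d : ℝ) : ℕ → A → ℝ
  | 0 => fun _ => 0
  | i + 1 => fun a =>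
      ((d - 1) / d ^ (i + 1)) *
        Real.log (∑ b, Real.exp (d ^ (i + 1) / (d - 1) * lam E d i b) * E b a)

/-- The optimal transition matrices `P*^{(i)}`. -/
noncomputable def Pstar {A : Type*} [Fintype A] (E : Matrix A A ℝ) (d : ℝ) (i : ℕ) :
    Matrix A A ℝ :=
  fun a b =>
    if 0 < E a b then
      Real.exp (d ^ (i + 1) / (d - 1) * lam E d i a) * E a b /
        ∑ c, Real.exp (d ^ (i + 1) / (d - 1) * lam E d i c) * E c b
    else 0

/-- The ordered product `P^{(j)} P^{(j+1)} ⋯ P^{(k−1)}`. -/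
noncomputable def matListProd {A : Type*} [Fintype A] [DecidableEq A]
    (P : ℕ → Matrix A A ℝ) (j k : ℕ) : Matrix A A ℝ :=
  ((List.range' j (k - j)).map P).prod

/-- The objective function
`F_k(π,P;1/d,E) = −Σ_{j=0}^{k−1} ((d−1)/d^{j+1}) D_KL(P^{(j)}‖E)^T (P^{(j+1)}⋯P^{(k−1)}) π`
(only `P 0, …, P (k−1)` are used). -/
noncomputable def Fk {A : Type*} [Fintype A] [DecidableEq A] (E : Matrix A A ℝ) (d : ℝ)
    (k : ℕ) (π : A → ℝ) (P : ℕ → Matrix A A ℝ) : ℝ :=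
  -∑ j ∈ Finset.range k, ((d - 1) / d ^ (j + 1)) *
      ∑ b, DKL (P j) E b * (matListProd P (j + 1) k).mulVec π b

/-- `P^{(k)}(d,E)`: the maximum of `F_k` over the feasible domain. -/
noncomputable def Pk {A : Type*} [Fintype A] [DecidableEq A] (E : Matrix A A ℝ)
    (d : ℝ) (k : ℕ) : ℝ :=
  sSup {x : ℝ | ∃ π P, IsProbVec π ∧ (∀ j < k, IsColStochastic (P j)) ∧
    (∀ j < k, ∀ a b, E a b = 0 → P j a b = 0) ∧ x = Fk E d k π P}

/-- `α = log min_b Σ_a E_{a,b}`. -/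
noncomputable def alp {A : Type*} [Fintype A] (E : Matrix A A ℝ) : ℝ :=
  Real.log (sInf {x : ℝ | ∃ b, x = ∑ a, E a b})

/-- `β = log max_b Σ_a E_{a,b}`. -/
noncomputable def bet {A : Type*} [Fintype A] (E : Matrix A A ℝ) : ℝ :=
  Real.log (sSup {x : ℝ | ∃ b, x = ∑ a, E a b})

/-- `γ = log min{E_{a,b} : E_{a,b} > 0}`. -/
noncomputable def gam {A : Type*} [Fintype A] (E : Matrix A A ℝ) : ℝ :=
  Real.log (sInf {x : ℝ | 0 < x ∧ ∃ a b, E a b = x})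

/-- `A_∞`: the symbols lying on a cycle, i.e. `a` with `(E^n)_{a,a} > 0` for some `n ≥ 1`. -/
def AinfSet {A : Type*} [Fintype A] [DecidableEq A] (E : Matrix A A ℝ) : Set A :=
  {a | ∃ n : ℕ, 1 ≤ n ∧ 0 < (E ^ n) a a}

/-- `L`: the least `n ≥ 1` with `(E^n)_{a,a} > 0` for all `a ∈ A_∞`. -/
noncomputable def Lconst {A : Type*} [Fintype A] [DecidableEq A] (E : Matrix A A ℝ) : ℕ :=
  sInf {n : ℕ | 1 ≤ n ∧ ∀ a ∈ AinfSet E, 0 < (E ^ n) a a}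

/-!
With `t_j = d^{j+1}/(d−1)` and the partition function `Z_j(b) = Σ_c e^{t_j λ^{(j)}_c} E_{c,b}`,
one has `λ^{(j+1)}_b = t_j⁻¹ log Z_j(b)`, and `P*^{(j)}` is the Gibbs matrix
`e^{t_j λ^{(j)}_a} E_{a,b} / Z_j(b)`. Since `log Z_j(b)` lies between `t_j min λ^{(j)} + α` and
`t_j max λ^{(j)} + β`, the bounds on `λ^{(k)}` follow by induction on `k`. For the Gibbs matrix,
`t_j⁻¹ D_KL(P*^{(j)}‖E)_b = Σ_a P*^{(j)}_{a,b} λ^{(j)}_a − λ^{(j+1)}_b`, so the sum defining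
`F_k(π, P*)` telescopes to `(λ^{(k)})^T π`, an average of the entries of `λ^{(k)}`.
-/

theorem sum_mul_mem_Icc_of_isProbVec {A : Type*} [Fintype A] {x π : A → ℝ} {L U : ℝ}
    (hπ : IsProbVec π) (hx : ∀ a, x a ∈ Set.Icc L U) :
    ∑ a, x a * π a ∈ Set.Icc L U := by
  obtain ⟨hπ_nonneg, hπ_sum⟩ := hπ
  constructor
  · calc L = ∑ a, L * π a := by rw [← Finset.mul_sum, hπ_sum, mul_one]
      _ ≤ ∑ a, x a * π a := Finset.sum_le_sum fun a _ =>
          mul_le_mul_of_nonneg_right (hx a).1 (hπ_nonneg a)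
  · calc ∑ a, x a * π a ≤ ∑ a, U * π a := Finset.sum_le_sum fun a _ =>
          mul_le_mul_of_nonneg_right (hx a).2 (hπ_nonneg a)
      _ = U := by rw [← Finset.mul_sum, hπ_sum, mul_one]

theorem log_sum_exp_mul_mem_Icc {ι : Type*} [Fintype ι] {w x : ι → ℝ} {t L U : ℝ}
    (hw : ∀ i, 0 ≤ w i) (hw_sum : 0 < ∑ i, w i) (ht : 0 ≤ t) (hx : ∀ i, x i ∈ Set.Icc L U) :
    Real.log (∑ i, Real.exp (t * x i) * w i) ∈
      Set.Icc (t * L + Real.log (∑ i, w i)) (t * U + Real.log (∑ i, w i)) := by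
  have hlow : Real.exp (t * L) * ∑ i, w i ≤ ∑ i, Real.exp (t * x i) * w i := by
    rw [Finset.mul_sum]
    gcongr with i
    · exact hw i
    · exact (hx i).1
  have hhigh : ∑ i, Real.exp (t * x i) * w i ≤ Real.exp (t * U) * ∑ i, w i := by
    rw [Finset.mul_sum]
    gcongr with i
    · exact hw i
    · exact (hx i).2
  have hpos : 0 < Real.exp (t * L) * ∑ i, w i := by positivity
  rw [← Real.log_exp (t * L), ← Real.log_exp (t * U), ← Real.log_mul (by positivity) hw_sum.ne',
    ← Real.log_mul (by positivity) hw_sum.ne']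
  exact ⟨Real.log_le_log hpos hlow, Real.log_le_log (hpos.trans_le hlow) hhigh⟩

section

open Matrix

variable {A : Type*} [Fintype A] {E : Matrix A A ℝ} {d : ℝ}

theorem log_colSum_mem_Icc (hcol : ∀ b, 0 < ∑ a, E a b) (b : A) :
    Real.log (∑ a, E a b) ∈ Set.Icc (alp E) (bet E) := by
  have hrange : {x : ℝ | ∃ b, x = ∑ a, E a b} = Set.range fun b => ∑ a, E a b := by
    ext x; simp [eq_comm]
  have hfin := Set.finite_range fun b => ∑ a, E a b
  have hne : (Set.range fun b => ∑ a, E a b).Nonempty := Set.range_nonempty_iff_nonempty.2 ⟨b⟩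
  obtain ⟨b₀, hb₀⟩ := hne.csInf_mem hfin
  rw [alp, bet, hrange]
  exact ⟨Real.log_le_log (hb₀ ▸ hcol b₀) (csInf_le hfin.bddBelow ⟨b, rfl⟩),
    Real.log_le_log (hcol b) (le_csSup hfin.bddAbove ⟨b, rfl⟩)⟩

theorem one_sub_inv_pow_succ_eq (hd : 1 < d) (i : ℕ) (x : ℝ) :
    (d - 1) / d ^ (i + 1) * (d ^ (i + 1) / (d - 1) * ((1 - (d ^ i)⁻¹) * x) + x) =
      (1 - (d ^ (i + 1))⁻¹) * x := by
  have : d - 1 ≠ 0 := by linarith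
  have : d ≠ 0 := by positivity
  field_simp
  ring

theorem lam_mem_Icc (hE : ∀ a b, 0 ≤ E a b) (hcol : ∀ b, 0 < ∑ a, E a b) (hd : 1 < d)
    (k : ℕ) (a : A) :
    lam E d k a ∈ Set.Icc ((1 - (d ^ k)⁻¹) * alp E) ((1 - (d ^ k)⁻¹) * bet E) := by
  induction k generalizing a with
  | zero => simp [lam]
  | succ i ih =>
    have hd₀ : 0 < d := by linarith
    have hd₁ : 0 < d - 1 := by linarith
    have hlog := log_sum_exp_mul_mem_Icc (fun b => hE b a) (hcol a)
      (div_pos (pow_pos hd₀ (i + 1)) hd₁).le ih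
    have hcolsum := log_colSum_mem_Icc hcol a
    have hc : 0 ≤ (d - 1) / d ^ (i + 1) := by positivity
    rw [← one_sub_inv_pow_succ_eq hd i, ← one_sub_inv_pow_succ_eq hd i]
    exact ⟨mul_le_mul_of_nonneg_left (by linarith [hlog.1, hcolsum.1]) hc,
      mul_le_mul_of_nonneg_left (by linarith [hlog.2, hcolsum.2]) hc⟩

noncomputable def partitionFn (E : Matrix A A ℝ) (d : ℝ) (j : ℕ) (b : A) : ℝ :=
  ∑ c, Real.exp (d ^ (j + 1) / (d - 1) * lam E d j c) * E c b

theorem partitionFn_pos (hE : ∀ a b, 0 ≤ E a b) (hcol : ∀ b, 0 < ∑ a, E a b) (j : ℕ) (b : A) :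
    0 < partitionFn E d j b := by
  obtain ⟨c, -, hc⟩ := (Finset.sum_pos_iff_of_nonneg fun a _ => hE a b).1 (hcol b)
  exact (Finset.sum_pos_iff_of_nonneg fun c _ => mul_nonneg (Real.exp_nonneg _) (hE c b)).2
    ⟨c, Finset.mem_univ c, mul_pos (Real.exp_pos _) hc⟩

theorem lam_succ (j : ℕ) (b : A) :
    lam E d (j + 1) b = (d - 1) / d ^ (j + 1) * Real.log (partitionFn E d j b) := rfl

theorem Pstar_eq_div (hE : ∀ a b, 0 ≤ E a b) (j : ℕ) (a b : A) :
    Pstar E d j a b =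
      Real.exp (d ^ (j + 1) / (d - 1) * lam E d j a) * E a b / partitionFn E d j b := by
  unfold Pstar partitionFn
  split_ifs with h
  · rfl
  · simp [le_antisymm (not_lt.1 h) (hE a b)]

theorem sum_Pstar (hE : ∀ a b, 0 ≤ E a b) (hcol : ∀ b, 0 < ∑ a, E a b) (j : ℕ) (b : A) :
    ∑ a, Pstar E d j a b = 1 := by
  simp_rw [Pstar_eq_div hE]
  rw [← Finset.sum_div]
  exact div_self (partitionFn_pos hE hcol j b).ne'

theorem DKL_Pstar (hE : ∀ a b, 0 ≤ E a b) (hcol : ∀ b, 0 < ∑ a, E a b) (hd : 1 < d) (j : ℕ) :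
    ((d - 1) / d ^ (j + 1)) • DKL (Pstar E d j) E =
      lam E d j ᵥ* Pstar E d j - lam E d (j + 1) := by
  funext b
  set t := d ^ (j + 1) / (d - 1)
  have hZ := partitionFn_pos (d := d) hE hcol j b
  have hterm : ∀ a, Pstar E d j a b * Real.log (Pstar E d j a b / E a b) =
      t * (lam E d j a * Pstar E d j a b) - Real.log (partitionFn E d j b) * Pstar E d j a b := by
    intro a
    by_cases hab : 0 < E a b
    · have hratio :
          Pstar E d j a b / E a b = Real.exp (t * lam E d j a) / partitionFn E d j b := by
        rw [Pstar_eq_div hE, div_right_comm, mul_div_cancel_right₀ _ hab.ne']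
      rw [hratio, Real.log_div (Real.exp_ne_zero _) hZ.ne', Real.log_exp]
      ring
    · simp [Pstar, hab]
  have hDKL : DKL (Pstar E d j) E b =
      t * (lam E d j ᵥ* Pstar E d j) b - Real.log (partitionFn E d j b) := by
    simp only [DKL, hterm, Finset.sum_sub_distrib, ← Finset.mul_sum, sum_Pstar hE hcol, mul_one]
    rfl
  have : d - 1 ≠ 0 := by linarith
  have : d ≠ 0 := by positivity
  simp only [Pi.smul_apply, Pi.sub_apply, smul_eq_mul, hDKL, lam_succ, t]
  field_simp

end

section

open Matrix

variable {A : Type*} [Fintype A] [DecidableEq A]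

theorem matListProd_self (P : ℕ → Matrix A A ℝ) (k : ℕ) : matListProd P k k = 1 := by
  simp [matListProd]

theorem matListProd_eq_mul (P : ℕ → Matrix A A ℝ) {j k : ℕ} (hjk : j < k) :
    matListProd P j k = P j * matListProd P (j + 1) k := by
  rw [matListProd, matListProd, show k - j = k - (j + 1) + 1 by omega, List.range'_succ]
  simp

theorem Fk_eq_of_telescoping {E : Matrix A A ℝ} {d : ℝ} {k : ℕ} (π : A → ℝ)
    {P : ℕ → Matrix A A ℝ} {g : ℕ → A → ℝ} (hg₀ : g 0 = 0)
    (hstep : ∀ j < k, ((d - 1) / d ^ (j + 1)) • DKL (P j) E = g j ᵥ* P j - g (j + 1)) :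
    Fk E d k π P = g k ⬝ᵥ π := by
  set v := fun j => matListProd P j k *ᵥ π
  have hterm : ∀ j < k, (d - 1) / d ^ (j + 1) * (DKL (P j) E ⬝ᵥ v (j + 1)) =
      g j ⬝ᵥ v j - g (j + 1) ⬝ᵥ v (j + 1) := by
    intro j hj
    rw [← smul_eq_mul, ← smul_dotProduct, hstep j hj, sub_dotProduct, ← dotProduct_mulVec,
      mulVec_mulVec, ← matListProd_eq_mul P hj]
  have hFk : Fk E d k π P = -∑ j ∈ Finset.range k, (g j ⬝ᵥ v j - g (j + 1) ⬝ᵥ v (j + 1)) :=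
    congrArg Neg.neg (Finset.sum_congr rfl fun j hj => hterm j (Finset.mem_range.1 hj))
  rw [hFk, Finset.sum_range_sub' (fun j => g j ⬝ᵥ v j), hg₀]
  simp [v, matListProd_self]

end

theorem Fk_Pstar {A : Type*} [Fintype A] [DecidableEq A] {E : Matrix A A ℝ} {d : ℝ}
    (hE : ∀ a b, 0 ≤ E a b) (hcol : ∀ b, 0 < ∑ a, E a b) (hd : 1 < d) (k : ℕ) (π : A → ℝ) :
    Fk E d k π (fun i => Pstar E d i) = ∑ a, lam E d k a * π a :=
  Fk_eq_of_telescoping π rfl fun j _ => DKL_Pstar hE hcol hd j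

theorem stmt14_general {A : Type*} [Fintype A] [DecidableEq A] (E : Matrix A A ℝ)
    (hE : AssumptionA E) (d : ℝ) (hd : 1 < d) (k : ℕ) :
    (∀ a : A, (1 - (d ^ k)⁻¹) * alp E ≤ lam E d k a ∧
        lam E d k a ≤ (1 - (d ^ k)⁻¹) * bet E) ∧
    ∀ π : A → ℝ, IsProbVec π →
      Fk E d k π (fun i => Pstar E d i) = ∑ a, lam E d k a * π a ∧
      (1 - (d ^ k)⁻¹) * alp E ≤ Fk E d k π (fun i => Pstar E d i) ∧
      Fk E d k π (fun i => Pstar E d i) ≤ (1 - (d ^ k)⁻¹) * bet E := by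
  obtain ⟨hE_nonneg, hcol, -⟩ := hE
  have hlam := lam_mem_Icc hE_nonneg hcol hd k
  refine ⟨hlam, fun π hπ => ?_⟩
  rw [Fk_Pstar hE_nonneg hcol hd k π]
  exact ⟨rfl, sum_mul_mem_Icc_of_isProbVec hπ hlam⟩

/-- `(1 − d^{−k})·α ≤ λ^{(k)}_a ≤ (1 − d^{−k})·β`; equivalently, for every
probability vector `π`, `F_k(π,P*) = (λ^{(k)})^T π ∈ [(1 − d^{−k})α, (1 − d^{−k})β]`. -/
theorem stmt14 {A : Type*} [Fintype A] [DecidableEq A] [Nonempty A] (E : Matrix A A ℝ)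
    (hE : AssumptionA E) (d : ℝ) (hd : 1 < d) (k : ℕ) (hk : 1 ≤ k) :
    (∀ a : A, (1 - (d ^ k)⁻¹) * alp E ≤ lam E d k a ∧
        lam E d k a ≤ (1 - (d ^ k)⁻¹) * bet E) ∧
    ∀ π : A → ℝ, IsProbVec π →
      Fk E d k π (fun i => Pstar E d i) = ∑ a, lam E d k a * π a ∧
      (1 - (d ^ k)⁻¹) * alp E ≤ Fk E d k π (fun i => Pstar E d i) ∧
      Fk E d k π (fun i => Pstar E d i) ≤ (1 - (d ^ k)⁻¹) * bet E :=
  stmt14_general E hE d hd k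
end
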